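/- Let a group G act faithfully and 2-transitively on a set X, and let A be a nontrivial abelian normal subgroup of G. Then A acts simply transitively on X: for every x ∈ X, the map A → X sending a ↦ a·x is a bijection. (Claim established in the proof of Lemma 1.) -/

import Mathlib

/-! A 2-transitive action is primitive, so the nontrivial normal subgroup `A`, which moves
some point by faithfulness, is transitive. A transitive abelian group acts regularly: if `a`
fixes `x`, it fixes every `b • x` since `a • b • x = b • a • x`, so `a = 1` by faithfulness. -/

/-- An action of a group `G` on a set `X` is 2-transitive if for any two pairs
`(x₁, x₂)` and `(y₁, y₂)` of elements of `X` with `x₁ ≠ x₂` and `y₁ ≠ y₂` there exists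
`g ∈ G` with `g • x₁ = y₁` and `g • x₂ = y₂`. -/
def IsTwoTransitive (G X : Type*) [Group G] [MulAction G X] : Prop :=
  ∀ x₁ x₂ y₁ y₂ : X, x₁ ≠ x₂ → y₁ ≠ y₂ → ∃ g : G, g • x₁ = y₁ ∧ g • x₂ = y₂

open MulAction

theorem IsTwoTransitive.isMultiplyPretransitive {G X : Type*} [Group G] [MulAction G X]
    (h : IsTwoTransitive G X) : IsMultiplyPretransitive G X 2 :=
  is_two_pretransitive_iff.mpr fun hab hcd => h _ _ _ _ hab hcd

theorem MulAction.fixedPoints_ne_univ_of_faithfulSMul {H X : Type*} [Group H] [MulAction H X]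
    [FaithfulSMul H X] [Nontrivial H] : fixedPoints H X ≠ Set.univ := by
  intro hfix
  obtain ⟨h, hh⟩ := exists_ne (1 : H)
  refine hh (eq_of_smul_eq_smul (α := X) fun x => ?_)
  rw [one_smul]
  exact (hfix ▸ Set.mem_univ x : x ∈ fixedPoints H X) h

theorem MulAction.isCancelSMul_of_isPretransitive_of_isMulCommutative {H X : Type*} [Group H]
    [IsMulCommutative H] [MulAction H X] [FaithfulSMul H X] [IsPretransitive H X] :
    IsCancelSMul H X := by
  refine isCancelSMul_iff_eq_one_of_smul_eq.mpr fun a x hax =>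
    eq_of_smul_eq_smul (α := X) fun y => ?_
  obtain ⟨b, rfl⟩ := exists_smul_eq H x y
  rw [one_smul, smul_smul, (isMulCommutative_iff.mp ‹_›) a b, mul_smul, hax]

/-- If a group `G` acts faithfully and 2-transitively on a set `X` and `A` is a nontrivial
abelian normal subgroup of `G`, then `A` acts simply transitively on `X`: for every `x ∈ X`,
the map `A → X`, `a ↦ a • x`, is a bijection. -/
theorem abelian_normal_subgroup_simply_transitive_of_faithful_two_transitive
    {G X : Type*} [Group G] [MulAction G X] [FaithfulSMul G X]
    (h2 : IsTwoTransitive G X)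
    (A : Subgroup G) (hA : A ≠ ⊥) (hAnorm : A.Normal)
    (hAab : ∀ a b : G, a ∈ A → b ∈ A → a * b = b * a) :
    ∀ x : X, Function.Bijective (fun a : A => (a : G) • x) := by
  have : IsMulCommutative A :=
    isMulCommutative_iff.mpr fun a b => Subtype.ext (hAab a b a.2 b.2)
  have : Nontrivial A := (Subgroup.nontrivial_iff_ne_bot A).mpr hA
  have : IsPreprimitive G X := isPreprimitive_of_is_two_pretransitive h2.isMultiplyPretransitive
  have : IsPretransitive A X :=
    IsQuasiPreprimitive.isPretransitive_of_normal fixedPoints_ne_univ_of_faithfulSMul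
  have : IsCancelSMul A X := isCancelSMul_of_isPretransitive_of_isMulCommutative
  exact fun x => ⟨fun a b hab => IsCancelSMul.right_cancel a b x hab,
    fun y => exists_smul_eq A x y⟩
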